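/- Let A be a positive definite n×n complex matrix and X an n×n complex matrix. Set α = ||A + X* A⁻¹ X|| and β = ||A + X A⁻¹ X*||. If α > β, then for every Hermitian matrix B with B ≥ X* A⁻¹ X, the operator norm of the block matrix [[A, X], [X*, B]] is at most ||A + B||. -/

import Mathlib

/-!
Let `T = [[A, X], [X*, B]] ≥ 0` and suppose `λ = ‖T‖ > ‖A + B‖`. Then `λ` is an eigenvalue of `T`
with eigenvector `(u, v)`, and `C = λ - B ≥ A > 0`. The second block row gives `v = C⁻¹ X* u`, so the
first one says that `λ` is an eigenvalue of `A + X C⁻¹ X*`; since `C⁻¹ ≤ A⁻¹`, this forces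
`λ ≤ ‖A + X A⁻¹ X*‖ = β`. Hence `‖T‖ ≤ max ‖A + B‖ β`, while `β < α ≤ ‖A + B‖` by monotonicity of
the norm on positive matrices.
-/

open scoped Matrix ComplexOrder

/-- The operator norm (largest singular value) of a square complex matrix. -/
noncomputable def opNorm {m : Type*} [Fintype m] [DecidableEq m] (M : Matrix m m ℂ) : ℝ :=
  ‖Matrix.toEuclideanCLM (𝕜 := ℂ) M‖

open scoped Matrix.Norms.L2Operator MatrixOrder

namespace Matrix

variable {m : Type*} [Fintype m] [DecidableEq m]

lemma opNorm_eq_norm (M : Matrix m m ℂ) : opNorm M = ‖M‖ := rfl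

lemma exists_mulVec_eq_smul_of_mem_spectrum {𝕜 : Type*} [Field 𝕜] {M : Matrix m m 𝕜} {μ : 𝕜}
    (h : μ ∈ spectrum 𝕜 M) : ∃ v ≠ 0, M *ᵥ v = μ • v := by
  rw [← spectrum_toLin'] at h
  obtain ⟨v, hv⟩ := (Module.End.hasEigenvalue_iff_mem_spectrum.mpr h).exists_hasEigenvector
  exact ⟨v, hv.2, by simpa using hv.apply_eq_smul⟩

lemma le_norm_of_mulVec_eq_smul {M : Matrix m m ℂ} {r : ℝ} {v : m → ℂ} (hv : v ≠ 0)
    (h : M *ᵥ v = (r : ℂ) • v) : r ≤ ‖M‖ := by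
  have : Nonempty m := let ⟨i, _⟩ := Function.ne_iff.mp hv; ⟨i⟩
  have hr : (r : ℂ) ∈ spectrum ℂ M := by
    rw [← spectrum_toLin']
    exact Module.End.HasEigenvalue.mem_spectrum
      (Module.End.hasEigenvalue_of_hasEigenvector ⟨by simpa using h, hv⟩)
  simpa using (Complex.re_le_norm _).trans (spectrum.norm_le_norm_of_mem hr)

lemma le_norm_add_mul_inv_mul_of_fromBlocks_mulVec {A B X : Matrix m m ℂ} (hA : A.PosDef) {r : ℝ}
    (hAB : A + B ≤ algebraMap ℝ _ r) {w : m ⊕ m → ℂ} (hw0 : w ≠ 0)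
    (hw : fromBlocks A X Xᴴ B *ᵥ w = (r : ℂ) • w) : r ≤ ‖A + X * A⁻¹ * Xᴴ‖ := by
  set C := algebraMap ℝ (Matrix m m ℂ) r - B
  have hAC : A ≤ C := le_sub_iff_add_le.mpr hAB
  have hC : C.PosDef := isStrictlyPositive_iff_posDef.mp (hA.isStrictlyPositive.of_le hAC)
  obtain ⟨u, v, rfl⟩ : ∃ u v, w = Sum.elim u v :=
    ⟨w ∘ Sum.inl, w ∘ Sum.inr, (Sum.elim_comp_inl_inr w).symm⟩
  rw [fromBlocks_mulVec] at hw
  have hu : A *ᵥ u + X *ᵥ v = (r : ℂ) • u :=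
    funext fun i => by simpa using congrFun hw (Sum.inl i)
  have hv : Xᴴ *ᵥ u + B *ᵥ v = (r : ℂ) • v :=
    funext fun i => by simpa using congrFun hw (Sum.inr i)
  have hCv : C *ᵥ v = Xᴴ *ᵥ u := by
    rw [sub_mulVec, Algebra.algebraMap_eq_smul_one, smul_mulVec, one_mulVec, ← Complex.coe_smul,
      ← hv, add_sub_cancel_right]
  have hv' : v = C⁻¹ *ᵥ Xᴴ *ᵥ u := by
    rw [← hCv, mulVec_mulVec, nonsing_inv_mul _ ((isUnit_iff_isUnit_det _).mp hC.isUnit),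
      one_mulVec]
  have hu0 : u ≠ 0 := by
    rintro rfl
    simp [hv'] at hw0
  have heig : (A + X * C⁻¹ * Xᴴ) *ᵥ u = (r : ℂ) • u := by
    rw [add_mulVec, ← mulVec_mulVec, ← mulVec_mulVec, ← hv', hu]
  have hCA : C⁻¹ ≤ A⁻¹ := by
    simpa only [nonsing_inv_eq_ringInverse] using
      CStarAlgebra.ringInverse_le_ringInverse hAC hA.isStrictlyPositive
  calc r ≤ ‖A + X * C⁻¹ * Xᴴ‖ := le_norm_of_mulVec_eq_smul hu0 heig
    _ ≤ ‖A + X * A⁻¹ * Xᴴ‖ :=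
      CStarAlgebra.norm_le_norm_of_nonneg_of_le
        (hA.posSemidef.add (hC.inv.posSemidef.mul_mul_conjTranspose_same X)).nonneg
        (add_le_add_right (star_right_conjugate_le_conjugate hCA X) A)

theorem norm_fromBlocks_le_max {A B X : Matrix m m ℂ} (hA : A.PosDef) (hB : Xᴴ * A⁻¹ * X ≤ B) :
    ‖fromBlocks A X Xᴴ B‖ ≤ max ‖A + B‖ ‖A + X * A⁻¹ * Xᴴ‖ := by
  rw [le_max_iff, or_iff_not_imp_left, not_le]
  intro hlt
  have : Invertible A := hA.isUnit.invertible
  have hT : 0 ≤ fromBlocks A X Xᴴ B := ((PosDef.fromBlocks₁₁ X B hA).mpr hB).nonneg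
  have hAB : 0 ≤ A + B := add_nonneg hA.posSemidef.nonneg
    ((hA.inv.posSemidef.conjTranspose_mul_mul_same X).nonneg.trans hB)
  have : Nontrivial (Matrix (m ⊕ m) (m ⊕ m) ℂ) :=
    nontrivial_of_ne _ 0 (norm_pos_iff.mp ((norm_nonneg _).trans_lt hlt))
  have hspec := spectrum.algebraMap_mem ℂ (CStarAlgebra.norm_mem_spectrum_of_nonneg hT)
  obtain ⟨w, hw0, hw⟩ := exists_mulVec_eq_smul_of_mem_spectrum hspec
  rw [Complex.coe_algebraMap] at hw
  refine le_norm_add_mul_inv_mul_of_fromBlocks_mulVec hA ?_ hw0 hw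
  exact (CStarAlgebra.norm_le_iff_le_algebraMap _ ((norm_nonneg _).trans hlt.le) hAB).mp hlt.le

end Matrix

theorem stmt_2 {n : ℕ} (A X : Matrix (Fin n) (Fin n) ℂ) (hA : A.PosDef)
    (hαβ : opNorm (A + Xᴴ * A⁻¹ * X) > opNorm (A + X * A⁻¹ * Xᴴ)) :
    ∀ B : Matrix (Fin n) (Fin n) ℂ, B.IsHermitian → (B - Xᴴ * A⁻¹ * X).PosSemidef →
      opNorm (Matrix.fromBlocks A X Xᴴ B) ≤ opNorm (A + B) := by
  intro B _ hBX
  simp only [Matrix.opNorm_eq_norm] at hαβ ⊢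
  have hα : ‖A + Xᴴ * A⁻¹ * X‖ ≤ ‖A + B‖ :=
    CStarAlgebra.norm_le_norm_of_nonneg_of_le
      (hA.posSemidef.add (hA.inv.posSemidef.conjTranspose_mul_mul_same X)).nonneg
      (add_le_add_right (Matrix.le_iff.mpr hBX) A)
  exact (Matrix.norm_fromBlocks_le_max hA (Matrix.le_iff.mpr hBX)).trans
    (max_le le_rfl (hαβ.le.trans hα))
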